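/- The weak connectedness schema □(□p → q) ∨ □(□q → p) is not valid over the class of temporal here-and-there models: there is a finite here-and-there model with a world falsifying this formula. -/

import Mathlib

inductive TForm : Type where
  | atom : ℕ → TForm
  | bot : TForm
  | and : TForm → TForm → TForm
  | or : TForm → TForm → TForm
  | imp : TForm → TForm → TForm
  | next : TForm → TForm
  | dia : TForm → TForm
  | box : TForm → TForm
  | untl : TForm → TForm → TForm
  | rels : TForm → TForm → TForm

def sat {W : Type} [PartialOrder W] (S : W → W) (V : W → ℕ → Prop) : TForm → W → Prop
  | .atom p, w => V w p
  | .bot, _ => False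
  | .and φ ψ, w => sat S V φ w ∧ sat S V ψ w
  | .or φ ψ, w => sat S V φ w ∨ sat S V ψ w
  | .imp φ ψ, w => ∀ v, w ≤ v → sat S V φ v → sat S V ψ v
  | .next φ, w => sat S V φ (S w)
  | .dia φ, w => ∃ k, sat S V φ (S^[k] w)
  | .box φ, w => ∀ k, sat S V φ (S^[k] w)
  | .untl φ ψ, w => ∃ k, sat S V ψ (S^[k] w) ∧ ∀ i < k, sat S V φ (S^[i] w)
  | .rels φ ψ, w => ∀ k, sat S V ψ (S^[k] w) ∨ ∃ i < k, sat S V φ (S^[i] w)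

/-- Worlds of a temporal here-and-there model: a base world together with a
bit indicating "here" (false) or "there" (true). -/
structure HTW (T : Type) where
  base : T
  bit : Bool

instance (T : Type) : PartialOrder (HTW T) where
  le a b := a.base = b.base ∧ a.bit ≤ b.bit
  le_refl a := ⟨rfl, le_refl _⟩
  le_trans a b c h1 h2 := ⟨h1.1.trans h2.1, le_trans h1.2 h2.2⟩
  le_antisymm a b h1 h2 := by
    cases a; cases b
    simp only [HTW.mk.injEq]
    exact ⟨h1.1, le_antisymm h1.2 h2.2⟩

namespace HTW

variable {T : Type}

def lift (f : T → T) (x : HTW T) : HTW T := ⟨f x.base, x.bit⟩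

theorem lift_monotone (f : T → T) : Monotone (lift f) :=
  fun _ _ ⟨hbase, hbit⟩ => ⟨congrArg f hbase, hbit⟩

theorem exists_le_lift_eq (f : T → T) {w v : HTW T} (h : lift f w ≤ v) :
    ∃ u, w ≤ u ∧ lift f u = v :=
  ⟨⟨w.base, v.bit⟩, ⟨rfl, h.2⟩, congrArg (HTW.mk · v.bit) h.1⟩

theorem iterate_lift (f : T → T) (k : ℕ) (x : HTW T) :
    (lift f)^[k] x = ⟨f^[k] x.base, x.bit⟩ := by
  induction k generalizing x with
  | zero => rfl
  | succ k ih => rw [Function.iterate_succ_apply, ih, Function.iterate_succ_apply]; rfl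

end HTW

/-- The witness model on `T = Bool`, reading `false` as `a` and `true` as `b`, so that `f` is
constantly `b`; atom `0` is `p` (true on the base `b`) and atom `1` is `q` (true "there"). -/
def witnessVal (x : HTW Bool) (n : ℕ) : Prop :=
  (n = 0 ∧ x.base = true) ∨ (n = 1 ∧ x.bit = true)

theorem witnessVal_persistent {w v : HTW Bool} (h : w ≤ v) (n : ℕ) :
    witnessVal w n → witnessVal v n := by
  obtain ⟨hbase, hbit⟩ := h
  rintro (⟨rfl, hw⟩ | ⟨rfl, hw⟩)
  · exact Or.inl ⟨rfl, hbase ▸ hw⟩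
  · exact Or.inr ⟨rfl, le_antisymm (Bool.le_true _) (hw ▸ hbit)⟩

theorem witness_sat_box_p {x : HTW Bool} (hx : x.base = true) :
    sat (HTW.lift fun _ => true) witnessVal (.box (.atom 0)) x := fun k => by
  rw [HTW.iterate_lift, hx]
  exact Or.inl ⟨rfl, Function.iterate_fixed rfl k⟩

theorem witness_sat_box_q {x : HTW Bool} (hx : x.bit = true) :
    sat (HTW.lift fun _ => true) witnessVal (.box (.atom 1)) x := fun k => by
  rw [HTW.iterate_lift]
  exact Or.inr ⟨rfl, hx⟩

/-- The weak connectedness schema □(□p → q) ∨ □(□q → p) is not valid over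
temporal here-and-there models: some finite here-and-there model (with
`S (t,i) = (f t, i)`, which is automatically persistent) falsifies it. -/
theorem weak_connectedness_not_HT_valid :
    ∃ (T : Type) (_ : Fintype T) (f : T → T) (V : HTW T → ℕ → Prop),
      (∀ w v : HTW T, w ≤ v → ∀ p, V w p → V v p) ∧
      ((∀ w v : HTW T, w ≤ v → (⟨f w.base, w.bit⟩ : HTW T) ≤ ⟨f v.base, v.bit⟩) ∧
       (∀ (w v : HTW T), (⟨f w.base, w.bit⟩ : HTW T) ≤ v →
          ∃ u : HTW T, w ≤ u ∧ (⟨f u.base, u.bit⟩ : HTW T) = v) ∧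
       ∃ (w : HTW T) (p q : ℕ),
         ¬ sat (fun x : HTW T => ⟨f x.base, x.bit⟩) V
             (.or (.box (.imp (.box (.atom p)) (.atom q)))
                  (.box (.imp (.box (.atom q)) (.atom p)))) w) := by
  refine ⟨Bool, inferInstance, fun _ => true, witnessVal,
    fun _ _ h => witnessVal_persistent h, fun _ _ h => HTW.lift_monotone (fun _ => true) h,
    fun _ _ h => HTW.exists_le_lift_eq (fun _ => true) h, ⟨false, false⟩, 0, 1, ?_⟩
  rintro (h | h)
  · -- `S w = (b, 0)` satisfies `□p` but not `q`
    simpa [sat, witnessVal] using h 1 ⟨true, false⟩ le_rfl (witness_sat_box_p rfl)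
  · -- `(a, 1) ≥ w` satisfies `□q` but not `p`
    simpa [sat, witnessVal] using
      h 0 ⟨false, true⟩ ⟨rfl, Bool.false_le _⟩ (witness_sat_box_q rfl)
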